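/- arXiv:1811.10504 — 3 statements merged into one kernel-verified Lean document; each statement's English description precedes it below -/
import Mathlib

section
/- Let p : ℝ → ℂ be a Schwartz function and ṽ : ℝ → ℂ a C² function. Then the kernel K(x,y) = ∫ e^{i(x-y)ξ} p(ξ)(ṽ(y) - ṽ(x)) dξ of the commutator [p(D), ṽ] can be written as K = K₁ + K₂ where K₁(x,y) = ∫ e^{i(x-y)ξ} (-i p'(ξ) ṽ'(x)) dξ is the kernel of -i ṽ' p'(D), and K₂(x,y) = -∫ e^{i(x-y)ξ} p''(ξ) ∫₀¹ ṽ''(h(x-y)+y) h dh dξ. -/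
open MeasureTheory intervalIntegral Complex Real FourierTransform

/-!
Taylor's formula with integral remainder along the segment `h ↦ h (x - y) + y` gives
`ṽ(y) - ṽ(x) = (y - x) ṽ'(x) + (y - x)² ∫₀¹ ṽ''(h (x - y) + y) h dh`.
Integrating by parts in `ξ`, `∫ e^{i(x-y)ξ} p' = -i (x - y) ∫ e^{i(x-y)ξ} p`: applied once this
matches the first-order term with the kernel of `-i ṽ' p'(D)`, applied twice (note
`(-i (x - y))² = -(y - x)²`) it matches the remainder with the `p''` term.
-/

section FourierKernel

variable {E : Type*} [NormedAddCommGroup E] [NormedSpace ℂ E]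

theorem integral_exp_I_mul_smul_eq_fourier (f : ℝ → E) (t : ℝ) :
    ∫ ξ : ℝ, exp (I * t * ξ) • f ξ = 𝓕 f (-t / (2 * π)) := by
  rw [Real.fourier_real_eq_integral_exp_smul]
  congr 1 with ξ
  congr 2
  push_cast
  field_simp

theorem integral_exp_I_mul_smul_deriv [CompleteSpace E] {f : ℝ → E} (hf : Integrable f)
    (hf' : Differentiable ℝ f) (hdf : Integrable (deriv f)) (t : ℝ) :
    ∫ ξ : ℝ, exp (I * t * ξ) • deriv f ξ = (-(I * t)) • ∫ ξ : ℝ, exp (I * t * ξ) • f ξ := by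
  rw [integral_exp_I_mul_smul_eq_fourier, integral_exp_I_mul_smul_eq_fourier,
    Real.fourier_deriv hf hf' hdf]
  push_cast
  field_simp

theorem SchwartzMap.integral_exp_I_mul_smul_deriv [CompleteSpace E] (p : SchwartzMap ℝ E)
    (t : ℝ) :
    ∫ ξ : ℝ, exp (I * t * ξ) • deriv p ξ = (-(I * t)) • ∫ ξ : ℝ, exp (I * t * ξ) • p ξ := by
  simpa only [← SchwartzMap.derivCLM_apply ℝ] using
    _root_.integral_exp_I_mul_smul_deriv p.integrable p.differentiable
      (derivCLM ℝ E p).integrable t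

end FourierKernel

theorem iteratedDeriv_comp_mul_add {E : Type*} [NormedAddCommGroup E] [NormedSpace ℝ E]
    {n : ℕ} {v : ℝ → E} (hv : ContDiff ℝ n v) (c d : ℝ) :
    iteratedDeriv n (fun h => v (h * c + d)) = fun h => c ^ n • iteratedDeriv n v (h * c + d) := by
  have := iteratedDeriv_comp_const_smul (hv.comp (f := fun z => z + d) (by fun_prop)) c
  simp only [Function.comp_def, iteratedDeriv_comp_add_const] at this
  simpa only [mul_comm c] using this

theorem intervalIntegral_iteratedDeriv_two_mul {φ : ℝ → ℂ} (hφ : ContDiff ℝ 2 φ) :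
    ∫ h in (0:ℝ)..1, iteratedDeriv 2 φ h * h = deriv φ 1 - (φ 1 - φ 0) := by
  have hφ' : ContDiff ℝ 1 (deriv φ) := hφ.iterate_deriv' 1 1
  have parts := integral_mul_deriv_eq_deriv_mul (a := 0) (b := 1) (u := fun h : ℝ => (h : ℂ))
    (u' := fun _ => 1) (v := deriv φ) (v' := iteratedDeriv 2 φ)
    (fun h _ => by simpa using (hasDerivAt_id h).ofReal_comp)
    (fun h _ => by
      rw [iteratedDeriv_succ, iteratedDeriv_one]
      exact (hφ'.differentiable one_ne_zero h).hasDerivAt)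
    intervalIntegrable_const
    ((hφ.continuous_iteratedDeriv 2 le_rfl).intervalIntegrable 0 1)
  simp only [one_mul] at parts
  rw [integral_deriv_eq_sub (fun h _ => hφ.differentiable (by norm_num) h)
    (hφ'.continuous.intervalIntegrable 0 1)] at parts
  simpa [mul_comm] using parts

theorem sub_eq_deriv_add_integral_iteratedDeriv_two {v : ℝ → ℂ} (hv : ContDiff ℝ 2 v) (x y : ℝ) :
    v y - v x = ((y : ℂ) - x) * deriv v x
      + ((y : ℂ) - x) ^ 2 * ∫ h in (0:ℝ)..1, iteratedDeriv 2 v (h * (x - y) + y) * (h : ℂ) := by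
  have key := intervalIntegral_iteratedDeriv_two_mul (φ := fun h => v (h * (x - y) + y))
    (hv.comp (by fun_prop))
  rw [iteratedDeriv_comp_mul_add hv, ← iteratedDeriv_one,
    iteratedDeriv_comp_mul_add (hv.of_le one_le_two)] at key
  simp only [Complex.real_smul, mul_assoc, intervalIntegral.integral_const_mul] at key
  push_cast at key
  simp only [one_mul, zero_mul, zero_add, sub_add_cancel, iteratedDeriv_one, pow_one] at key
  linear_combination -key

/-- Commutator kernel decomposition (Taylor expansion with integral remainder plus
integration by parts in `ξ`): the kernel of `[p(D), ṽ]` splits as `K₁ + K₂`, where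
`K₁` is the kernel of `-i ṽ' p'(D)` and `K₂` carries the second-order remainder. -/
theorem statement_5 (p : SchwartzMap ℝ ℂ) (v : ℝ → ℂ) (hv : ContDiff ℝ 2 v) (x y : ℝ) :
    (∫ ξ : ℝ, Complex.exp (Complex.I * ((x : ℂ) - (y : ℂ)) * (ξ : ℂ)) * p ξ * (v y - v x))
      = (∫ ξ : ℝ, Complex.exp (Complex.I * ((x : ℂ) - (y : ℂ)) * (ξ : ℂ)) *
            (-Complex.I * deriv (fun ζ : ℝ => p ζ) ξ * deriv v x))
        + (- ∫ ξ : ℝ, Complex.exp (Complex.I * ((x : ℂ) - (y : ℂ)) * (ξ : ℂ)) *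
              deriv (deriv (fun ζ : ℝ => p ζ)) ξ *
              (∫ h in (0:ℝ)..1, iteratedDeriv 2 v (h * (x - y) + y) * (h : ℂ))) := by
  have hp' := p.integral_exp_I_mul_smul_deriv (x - y)
  have hp'' := (SchwartzMap.derivCLM ℝ ℂ p).integral_exp_I_mul_smul_deriv (x - y)
  rw [show ⇑(SchwartzMap.derivCLM ℝ ℂ p) = deriv p from
    funext (SchwartzMap.derivCLM_apply ℝ p)] at hp''
  simp only [smul_eq_mul] at hp' hp''
  push_cast at hp' hp''
  simp only [mul_comm (-I), ← mul_assoc, MeasureTheory.integral_mul_const]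
  rw [hp'', hp', sub_eq_deriv_add_integral_iteratedDeriv_two hv]
  set F := ∫ ξ : ℝ, exp (I * ((x : ℂ) - y) * ξ) * p ξ
  set R := ∫ h in (0:ℝ)..1, iteratedDeriv 2 v (h * (x - y) + y) * (h : ℂ)
  linear_combination ((x - y : ℂ) ^ 2 * F * R - (x - y : ℂ) * F * deriv v x) * I_sq
end

section
/- Let a, V : [0,T] × ℝ → ℝ be C¹ functions with a bounded below by a_min > 0, and let λ ≥ 1. Define H(t,x,ξ) = V(t,x)ξ + √(a(t,x)|ξ|) for ξ ≠ 0. Consider the Hamiltonian ODE ẋ = H_ξ(t,x,ξ), ξ̇ = -H_x(t,x,ξ) with initial data (x₀, ξ₀) at time s, where |ξ₀| ∈ [λ/2, 2λ]. Then for as long as the solution exists with ξ(t) ≠ 0, the function m(t) = |ξ(t)|^{1/2} satisfies the differential inequality |m'(t)| ≤ (1/2)(‖∂_x V(t,·)‖_∞ m(t) + ‖∂_x √a(t,·)‖_∞), and consequently by Gronwall, if ∫_s^t (‖∂_x V‖_∞ + λ^{-1/2}‖∂_x√a‖_∞ λ^{1/2}) dτ is small enough (≪ 1), then |ξ(t)|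 ∈ [|ξ₀|/2, 2|ξ₀|] i.e. the flow preserves the dyadic frequency annulus. -/
/-!
Along the flow `ξ' = -(∂ₓV ξ + ∂ₓ√a √|ξ|)`, so `m = √|ξ|` satisfies
`|m'| = |ξ'| / (2m) ≤ (‖∂ₓV‖ m + ‖∂ₓ√a‖) / 2 ≤ c (m + 1)` with `c = (‖∂ₓV‖ + ‖∂ₓ√a‖) / 2`.
The integrating factors `exp (∓∫ c)` make `(m + 1) exp (-∫ c)` antitone and `(m + 1) exp (∫ c)`
monotone, so `m + 1` moves by a factor at most `exp (1/20) ≤ 20/19` once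
`∫ (‖∂ₓV‖ + ‖∂ₓ√a‖) ≤ 1/10`. Since `m(s)² = |ξ(s)| ≥ λ/2 ≥ 1/2`, this keeps `m² = |ξ|` within a
factor `2` of `|ξ(s)|`.
-/

open MeasureTheory Set Real

lemma exists_hasDerivAt_sqrt_abs_of_abs_deriv_le {f : ℝ → ℝ} {f' t g₁ g₂ : ℝ}
    (hf : HasDerivAt f f' t) (h0 : f t ≠ 0) (hbound : |f'| ≤ g₁ * |f t| + g₂ * √|f t|) :
    ∃ m', HasDerivAt (fun τ => √|f τ|) m' t ∧ |m'| ≤ 1 / 2 * (g₁ * √|f t| + g₂) := by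
  refine ⟨_, ((hasDerivAt_abs h0).comp t hf).sqrt (abs_ne_zero.2 h0), ?_⟩
  have hm : 0 < 2 * √|f t| := mul_pos two_pos (sqrt_pos.2 (abs_pos.2 h0))
  have hsq : √|f t| * √|f t| = |f t| := mul_self_sqrt (abs_nonneg _)
  have hsign : |(SignType.sign (f t) : ℝ)| = 1 := by
    rcases h0.lt_or_gt with h | h <;> simp [h]
  simp only [Function.comp_apply, abs_div, abs_mul, hsign, one_mul, abs_of_pos hm]
  rw [div_le_iff₀ hm]
  calc |f'| ≤ g₁ * |f t| + g₂ * √|f t| := hbound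
    _ = 1 / 2 * (g₁ * √|f t| + g₂) * (2 * √|f t|) := by linear_combination -g₁ * hsq

lemma abs_mul_add_mul_sqrt_abs_le {p q y g₁ g₂ : ℝ} (hp : |p| ≤ g₁) (hq : |q| ≤ g₂) :
    |p * y + q * √(|y|)| ≤ g₁ * |y| + g₂ * √|y| := by
  refine (abs_add_le _ _).trans ?_
  rw [abs_mul, abs_mul, abs_of_nonneg (sqrt_nonneg _)]
  gcongr

lemma antitoneOn_mul_exp_neg_of_deriv_le {u C c : ℝ → ℝ} {s T : ℝ}
    (hu : ContinuousOn u (Icc s T)) (hC : ContinuousOn C (Icc s T))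
    (hu' : ∀ r ∈ Ioo s T, ∃ u', HasDerivAt u u' r ∧ u' ≤ c r * u r)
    (hC' : ∀ r ∈ Ioo s T, HasDerivAt C (c r) r) :
    AntitoneOn (fun r => u r * exp (-C r)) (Icc s T) := by
  have hd : ∀ r ∈ Ioo s T, ∃ d ≤ 0, HasDerivAt (fun r => u r * exp (-C r)) d r := by
    intro r hr
    obtain ⟨u', hu'r, hle⟩ := hu' r hr
    refine ⟨exp (-C r) * (u' - c r * u r),
      mul_nonpos_of_nonneg_of_nonpos (exp_pos _).le (by linarith), ?_⟩
    have hexp : HasDerivAt (fun r => exp (-C r)) (exp (-C r) * -c r) r := (hC' r hr).neg.exp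
    exact (hu'r.fun_mul hexp).congr_deriv (by ring)
  refine antitoneOn_of_deriv_nonpos (convex_Icc s T) (hu.mul hC.neg.rexp)
    (fun r hr => ?_) (fun r hr => ?_) <;> rw [interior_Icc] at hr <;>
    obtain ⟨d, hd0, hdr⟩ := hd r hr
  · exact hdr.differentiableAt.differentiableWithinAt
  · rwa [hdr.deriv]

theorem le_exp_integral_mul_of_abs_deriv_le {u c : ℝ → ℝ} {s T t : ℝ}
    (hu : ContinuousOn u (Icc s T)) (hc : Continuous c)
    (hu' : ∀ r ∈ Ioo s T, ∃ u', HasDerivAt u u' r ∧ |u'| ≤ c r * u r) (ht : t ∈ Icc s T) :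
    u t ≤ exp (∫ τ in s..t, c τ) * u s ∧ u s ≤ exp (∫ τ in s..t, c τ) * u t := by
  set C : ℝ → ℝ := fun r => ∫ τ in s..r, c τ
  have hC' : ∀ r, HasDerivAt C (c r) r := fun r =>
    intervalIntegral.integral_hasDerivAt_right (hc.intervalIntegrable _ _)
      hc.stronglyMeasurable.stronglyMeasurableAtFilter hc.continuousAt
  have hC : ContinuousOn C (Icc s T) := fun r _ => (hC' r).continuousAt.continuousWithinAt
  have hs : s ∈ Icc s T := ⟨le_rfl, ht.1.trans ht.2⟩
  have hCs : C s = 0 := intervalIntegral.integral_same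
  have hF := antitoneOn_mul_exp_neg_of_deriv_le hu hC
    (fun r hr => (hu' r hr).imp fun u' h => ⟨h.1, (le_abs_self _).trans h.2⟩)
    (fun r _ => hC' r) hs ht ht.1
  -- the lower bound is the upper bound for `-u` and `-C`
  have hG := antitoneOn_mul_exp_neg_of_deriv_le (u := fun r => -u r) (C := fun r => -C r)
    hu.neg hC.neg
    (fun r hr => (hu' r hr).elim fun u' h => ⟨-u', h.1.neg, by linarith [neg_abs_le u', h.2]⟩)
    (fun r _ => (hC' r).neg) hs ht ht.1
  simp only [hCs, neg_zero, exp_zero, mul_one, neg_neg, neg_mul, neg_le_neg_iff] at hF hG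
  rw [exp_neg, ← div_eq_mul_inv, div_le_iff₀ (exp_pos _)] at hF
  exact ⟨hF.trans_eq (mul_comm _ _), hG.trans_eq (mul_comm _ _)⟩

lemma exp_half_integral_le_of_integral_le {c : ℝ → ℝ} {s T t : ℝ} (hc : Continuous c)
    (hc0 : ∀ τ, 0 ≤ c τ) (ht : t ∈ Icc s T) (hsmall : (∫ τ in s..T, c τ) ≤ 1 / 10) :
    exp (∫ τ in s..t, 1 / 2 * c τ) ≤ 20 / 19 := by
  have hint : (∫ τ in s..t, 1 / 2 * c τ) ≤ 1 / 20 := by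
    rw [intervalIntegral.integral_const_mul]
    have := intervalIntegral.integral_mono_interval (μ := volume) le_rfl ht.1 ht.2
      (Filter.Eventually.of_forall hc0) (hc.intervalIntegrable s T)
    linarith
  calc _ ≤ exp (1 / 20) := exp_le_exp.2 hint
    _ ≤ 1 / (1 - 1 / 20) := exp_bound_div_one_sub_of_interval (by norm_num) (by norm_num)
    _ = 20 / 19 := by norm_num

lemma sq_mem_Icc_of_add_one_le_of_add_one_le {A B : ℝ} (hA : 0 ≤ A) (hB2 : 1 / 2 ≤ B ^ 2)
    (hAB : A + 1 ≤ 20 / 19 * (B + 1)) (hBA : B + 1 ≤ 20 / 19 * (A + 1)) :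
    A ^ 2 ∈ Icc (B ^ 2 / 2) (2 * B ^ 2) := by
  constructor
  · nlinarith [sq_nonneg (20*A - 19*B + 1), sq_nonneg (A - B), sq_nonneg (A + B)]
  · nlinarith [sq_nonneg (19*A - 20*B - 1), sq_nonneg (A - B), sq_nonneg (A + B)]

lemma sq_mem_Icc_of_abs_deriv_le {m g₁ g₂ : ℝ → ℝ} {s T t : ℝ}
    (hm0 : ∀ r ∈ Icc s T, 0 ≤ m r) (hm : ContinuousOn m (Icc s T))
    (hm' : ∀ r ∈ Ioo s T, ∃ m', HasDerivAt m m' r ∧ |m'| ≤ 1 / 2 * (g₁ r * m r + g₂ r))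
    (hg₁ : Continuous g₁) (hg₂ : Continuous g₂) (hg₁0 : ∀ τ, 0 ≤ g₁ τ) (hg₂0 : ∀ τ, 0 ≤ g₂ τ)
    (hs : 1 / 2 ≤ m s ^ 2) (hsmall : (∫ τ in s..T, (g₁ τ + g₂ τ)) ≤ 1 / 10) (ht : t ∈ Icc s T) :
    m t ^ 2 ∈ Icc (m s ^ 2 / 2) (2 * m s ^ 2) := by
  have hms := hm0 s ⟨le_rfl, ht.1.trans ht.2⟩
  have hmt := hm0 t ht
  obtain ⟨hup, hlo⟩ := le_exp_integral_mul_of_abs_deriv_le (u := fun r => m r + 1)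
    (c := fun r => 1 / 2 * (g₁ r + g₂ r)) (hm.add continuousOn_const) (by fun_prop)
    (fun r hr => (hm' r hr).elim fun m' h => ⟨m', h.1.add_const 1, by
      nlinarith [h.2, mul_nonneg (hg₂0 r) (hm0 r (Ioo_subset_Icc_self hr)), hg₁0 r]⟩) ht
  have hexp := exp_half_integral_le_of_integral_le (c := fun τ => g₁ τ + g₂ τ) (by fun_prop)
    (fun τ => add_nonneg (hg₁0 τ) (hg₂0 τ)) ht hsmall
  exact sq_mem_Icc_of_add_one_le_of_add_one_le hmt hs (by nlinarith) (by nlinarith)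

/-- Frequency preservation for the Hamilton flow of `H = Vξ + √(a|ξ|)`:
`m(t) = |ξ(t)|^{1/2}` satisfies `|m'| ≤ (1/2)(‖∂ₓV‖_∞ m + ‖∂ₓ√a‖_∞)`, and by
Gronwall, if the time integral of the coefficient bounds is small enough then the
flow preserves the dyadic frequency annulus: `|ξ(t)| ∈ [|ξ₀|/2, 2|ξ₀|]`. -/
theorem statement_6 :
    ∃ ε : ℝ, 0 < ε ∧
      ∀ (s T lam amin : ℝ) (a V Vx sax : ℝ → ℝ → ℝ) (g₁ g₂ x ξ : ℝ → ℝ),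
        s ≤ T → 1 ≤ lam → 0 < amin →
        (∀ t z, amin ≤ a t z) →
        (∀ t z, HasDerivAt (fun w => V t w) (Vx t z) z) →
        (∀ t z, HasDerivAt (fun w => Real.sqrt (a t w)) (sax t z) z) →
        (∀ t z, |Vx t z| ≤ g₁ t) →
        (∀ t z, |sax t z| ≤ g₂ t) →
        Continuous g₁ → Continuous g₂ →
        (∀ t, 0 ≤ g₁ t) → (∀ t, 0 ≤ g₂ t) →
        (∀ t ∈ Set.Icc s T, ξ t ≠ 0) →
        (∀ t ∈ Set.Icc s T, HasDerivAt x
            (V t (x t) + (1/2) * Real.sqrt (a t (x t)) * |ξ t| ^ (-(3:ℝ)/2) * ξ t) t) →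
        (∀ t ∈ Set.Icc s T, HasDerivAt ξ
            (-(Vx t (x t) * ξ t + sax t (x t) * Real.sqrt |ξ t|)) t) →
        |ξ s| ∈ Set.Icc (lam / 2) (2 * lam) →
        ((∀ t ∈ Set.Icc s T, ∃ m' : ℝ,
            HasDerivAt (fun τ => Real.sqrt |ξ τ|) m' t ∧
              |m'| ≤ (1/2) * (g₁ t * Real.sqrt |ξ t| + g₂ t)) ∧
          ((∫ τ in s..T, (g₁ τ + lam ^ (-(1:ℝ)/2) * g₂ τ * lam ^ ((1:ℝ)/2))) ≤ ε →
            ∀ t ∈ Set.Icc s T, |ξ t| ∈ Set.Icc (|ξ s| / 2) (2 * |ξ s|))) := by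
  refine ⟨1 / 10, by norm_num, ?_⟩
  intro s T lam amin a V Vx sax g₁ g₂ x ξ _ hlam _ _ _ _ hVx hsax hg₁ hg₂ hg₁0 hg₂0 hξ0 _ hξ hξs
  have hm : ∀ t ∈ Icc s T, ∃ m', HasDerivAt (fun τ => √|ξ τ|) m' t ∧
      |m'| ≤ 1 / 2 * (g₁ t * √|ξ t| + g₂ t) := fun t ht =>
    exists_hasDerivAt_sqrt_abs_of_abs_deriv_le (hξ t ht) (hξ0 t ht)
      (by rw [abs_neg]; exact abs_mul_add_mul_sqrt_abs_le (hVx t (x t)) (hsax t (x t)))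
  refine ⟨hm, fun hsmall t ht => ?_⟩
  have hlam_cancel : ∀ τ, lam ^ (-(1:ℝ)/2) * g₂ τ * lam ^ ((1:ℝ)/2) = g₂ τ := fun τ => by
    rw [mul_right_comm, ← rpow_add (by linarith)]
    norm_num
  simp only [hlam_cancel] at hsmall
  have hsq : ∀ τ, |ξ τ| = √|ξ τ| ^ 2 := fun τ => (sq_sqrt (abs_nonneg _)).symm
  rw [hsq t, hsq s]
  exact sq_mem_Icc_of_abs_deriv_le (m := fun τ => √|ξ τ|) (fun r _ => sqrt_nonneg _)
    (fun r hr => (hm r hr).elim fun _ h => h.1.continuousAt.continuousWithinAt)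
    (fun r hr => hm r (Ioo_subset_Icc_self hr)) hg₁ hg₂ hg₁0 hg₂0
    (by rw [← hsq]; linarith [hξs.1]) hsmall ht
end

section
/- Let λ ≥ 2, c ∈ (0,1). Suppose x^t, ξ^t are functions of initial data (x,ξ) such that: (a) whenever |x^t(x₁,ξ₁) - x^t(x₂,ξ₂)| ≤ λ^{-3/4} one has |ξ₁ - ξ₂| ≤ 2|ξ^t(x₁,ξ₁) - ξ^t(x₂,ξ₂)| + λ^{3/4}; and (b) whenever additionally at another time s one has |x^s(x₁,ξ₁) - x^s(x₂,ξ₂)| ≤ λ^{-3/4}, the spreading bound λ^{-3/4} ≥ c·λ^{-3/2}(|ξ₁-ξ₂| - λ^{3/4})·|t-s| holds. Then the number of pairs (x,ξ) ∈ λ^{-3/4}ℤ × λ^{3/4}ℤ (with a fixed bound on multiplicity in x of at most C₀) whose trajectories pass within λ^{-3/4} of both (t,y) and (s,z) is at most C·|t-s|^{-1} for a constant C depending only on c and C₀. -/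
/-!
Points of `S` lie within `λ^{-3/4}` of `y` at time `t` and of `z` at time `s`. Two such points
are in general only `2λ^{-3/4}`-close, but if they lie on the same side of `y` and of `z` they are
`λ^{-3/4}`-close at both times, and the spreading bound then forces their frequencies to differ by
at most `λ^{3/4}(1 + (c|t-s|)⁻¹)`. On the `λ^{3/4}`-grid this leaves `O(1 + |t-s|⁻¹)` frequencies
in each of the four side classes, each carried by at most `C₀` points, and `|t-s| ≤ 1` turns the
total into `O(|t-s|⁻¹)`.
-/

open Set

theorem encard_le_mul_of_mapsTo {α β : Type*} {S : Set α} {T : Set β} {f : α → β} {K : ℕ∞}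
    (hf : MapsTo f S T) (hT : T.Finite) (hfib : ∀ b ∈ T, (S ∩ f ⁻¹' {b}).encard ≤ K) :
    S.encard ≤ T.encard * K := by
  have hcover : S ⊆ ⋃ b ∈ hT.toFinset, S ∩ f ⁻¹' {b} := fun a ha ↦
    mem_biUnion (hT.mem_toFinset.2 (hf ha)) ⟨ha, rfl⟩
  calc S.encard ≤ (⋃ b ∈ hT.toFinset, S ∩ f ⁻¹' {b}).encard := encard_le_encard hcover
    _ ≤ ∑ b ∈ hT.toFinset, (S ∩ f ⁻¹' {b}).encard := Finset.set_encard_biUnion_le _ _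
    _ ≤ ∑ _b ∈ hT.toFinset, K := Finset.sum_le_sum fun b hb ↦ hfib b (hT.mem_toFinset.1 hb)
    _ = T.encard * K := by rw [Finset.sum_const, nsmul_eq_mul, hT.encard_eq_coe_toFinset_card]

theorem encard_le_of_forall_abs_sub_le {T : Set ℝ} {B D : ℝ} (hB : 0 < B)
    (hgrid : ∀ ξ ∈ T, ∃ n : ℤ, ξ = B * n) (hspread : ∀ ξ ∈ T, ∀ η ∈ T, |ξ - η| ≤ B * D) :
    T.encard ≤ 2 * ⌊D⌋₊ + 1 := by
  obtain rfl | ⟨ξ₀, hξ₀⟩ := T.eq_empty_or_nonempty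
  · simp
  obtain ⟨n₀, rfl⟩ := hgrid _ hξ₀
  have hsub : T ⊆ (fun n : ℤ ↦ B * n) '' Finset.Icc (n₀ - ⌊D⌋₊) (n₀ + ⌊D⌋₊) := by
    intro ξ hξ
    obtain ⟨n, rfl⟩ := hgrid ξ hξ
    have hnD : |(n : ℝ) - n₀| ≤ D := by
      have := hspread _ hξ _ hξ₀
      rwa [← mul_sub, abs_mul, abs_of_pos hB, mul_le_mul_iff_right₀ hB] at this
    have hn : |n - n₀| ≤ ⌊D⌋₊ := by
      rw [Int.natCast_floor_eq_floor ((abs_nonneg _).trans hnD), Int.le_floor]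
      exact_mod_cast hnD
    refine ⟨n, ?_, rfl⟩
    rw [abs_le] at hn
    simp only [Finset.coe_Icc, mem_Icc]
    omega
  calc T.encard ≤ ((Finset.Icc (n₀ - ⌊D⌋₊) (n₀ + ⌊D⌋₊) : Finset ℤ) : Set ℤ).encard :=
        (encard_le_encard hsub).trans (encard_image_le _ _)
    _ = 2 * ⌊D⌋₊ + 1 := by
      rw [encard_coe_eq_coe_finsetCard, Int.card_Icc,
        show (n₀ + ⌊D⌋₊ + 1 - (n₀ - ⌊D⌋₊)).toNat = 2 * ⌊D⌋₊ + 1 by omega]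
      push_cast; rfl

theorem encard_le_of_snd_mem_zmultiples {α : Type*} {S : Set (α × ℝ)} {B D : ℝ} {K : ℕ∞}
    (hB : 0 < B) (hgrid : ∀ p ∈ S, ∃ n : ℤ, p.2 = B * n)
    (hspread : ∀ p ∈ S, ∀ q ∈ S, |p.2 - q.2| ≤ B * D)
    (hfib : ∀ ξ, {x | (x, ξ) ∈ S}.encard ≤ K) :
    S.encard ≤ (2 * ⌊D⌋₊ + 1) * K := by
  have hT : (Prod.snd '' S).encard ≤ 2 * ⌊D⌋₊ + 1 :=
    encard_le_of_forall_abs_sub_le hB (forall_mem_image.2 hgrid)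
      (forall_mem_image.2 fun p hp ↦ forall_mem_image.2 (hspread p hp))
  calc S.encard ≤ (Prod.snd '' S).encard * K :=
        encard_le_mul_of_mapsTo (mapsTo_image _ _) (finite_of_encard_le_coe (k := 2 * ⌊D⌋₊ + 1)
          (by exact_mod_cast hT)) fun ξ _ ↦ ?_
    _ ≤ (2 * ⌊D⌋₊ + 1) * K := mul_le_mul_left hT _
  have hsub : S ∩ Prod.snd ⁻¹' {ξ} ⊆ (·, ξ) '' {x | (x, ξ) ∈ S} := by
    rintro ⟨x, _⟩ ⟨hx, rfl⟩
    exact ⟨x, hx, rfl⟩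
  exact (encard_le_encard hsub).trans ((encard_image_le _ _).trans (hfib ξ))

theorem abs_sub_le_of_le_iff_le {a b y δ : ℝ} (ha : |a - y| ≤ δ) (hb : |b - y| ≤ δ)
    (hab : a ≤ y ↔ b ≤ y) : |a - b| ≤ δ := by
  rw [abs_le] at *
  by_cases h : a ≤ y
  · have := hab.1 h
    constructor <;> linarith
  · have := not_le.1 (mt hab.2 h)
    rw [not_le] at h
    constructor <;> linarith

theorem le_mul_one_add_inv_of_spreading {lam c τ d : ℝ} (hlam : 0 < lam) (hc : 0 < c)
    (hτ : 0 < τ)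
    (h : c * lam ^ (-(3:ℝ)/2) * (d - lam ^ ((3:ℝ)/4)) * τ ≤ lam ^ (-(3:ℝ)/4)) :
    d ≤ lam ^ ((3:ℝ)/4) * (1 + (c * τ)⁻¹) := by
  have hsplit : lam ^ (-(3:ℝ)/4) = lam ^ ((3:ℝ)/4) * lam ^ (-(3:ℝ)/2) := by
    rw [← Real.rpow_add hlam]; norm_num
  have hE := Real.rpow_pos_of_pos hlam (-(3:ℝ)/2)
  have h' : c * τ * (d - lam ^ ((3:ℝ)/4)) ≤ lam ^ ((3:ℝ)/4) := by
    rw [hsplit] at h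
    nlinarith
  rw [mul_one_add, ← div_eq_mul_inv, ← sub_le_iff_le_add', le_div_iff₀ (by positivity)]
  linarith

theorem encard_le_of_close_at_two_points {α : Type*} {S : Set (α × ℝ)} {u v : α × ℝ → ℝ}
    {y z δ B D : ℝ} {K : ℕ∞} (hB : 0 < B) (hgrid : ∀ p ∈ S, ∃ n : ℤ, p.2 = B * n)
    (hu : ∀ p ∈ S, |u p - y| ≤ δ) (hv : ∀ p ∈ S, |v p - z| ≤ δ)
    (hspread : ∀ p ∈ S, ∀ q ∈ S, |u p - u q| ≤ δ → |v p - v q| ≤ δ → |p.2 - q.2| ≤ B * D)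
    (hfib : ∀ ξ, {x | (x, ξ) ∈ S}.encard ≤ K) :
    S.encard ≤ 4 * ((2 * ⌊D⌋₊ + 1) * K) := by
  let side : α × ℝ → Bool × Bool := fun p ↦ (decide (u p ≤ y), decide (v p ≤ z))
  have hclass : ∀ σ, (S ∩ side ⁻¹' {σ}).encard ≤ (2 * ⌊D⌋₊ + 1) * K := by
    intro σ
    refine encard_le_of_snd_mem_zmultiples hB (fun p hp ↦ hgrid p hp.1) ?_
      fun ξ ↦ (encard_le_encard fun x hx ↦ hx.1).trans (hfib ξ)
    rintro p ⟨hp, hpσ⟩ q ⟨hq, hqσ⟩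
    have hpq : side p = side q := hpσ.trans hqσ.symm
    simp only [side, Prod.mk.injEq, decide_eq_decide] at hpq
    exact hspread p hp q hq (abs_sub_le_of_le_iff_le (hu p hp) (hu q hq) hpq.1)
      (abs_sub_le_of_le_iff_le (hv p hp) (hv q hq) hpq.2)
  simpa using encard_le_mul_of_mapsTo (mapsTo_univ side S) finite_univ fun σ _ ↦ hclass σ

theorem natCast_four_mul_floor_le {c τ : ℝ} (C₀ : ℕ) (hc : 0 < c) (hτ : 0 < τ) (hτ1 : τ ≤ 1) :
    ((4 * ((2 * ⌊1 + (c * τ)⁻¹⌋₊ + 1) * C₀) : ℕ) : ℝ) ≤ (C₀ + 1) * (12 + 8 / c) * τ⁻¹ := by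
  have hτinv : 1 ≤ τ⁻¹ := (one_le_inv₀ hτ).2 hτ1
  calc ((4 * ((2 * ⌊1 + (c * τ)⁻¹⌋₊ + 1) * C₀) : ℕ) : ℝ)
      ≤ 4 * ((2 * (1 + (c * τ)⁻¹) + 1) * C₀) := by
        push_cast; gcongr; exact Nat.floor_le (by positivity)
    _ = C₀ * (12 + 8 / c * τ⁻¹) := by rw [mul_inv]; ring
    _ ≤ C₀ * ((12 + 8 / c) * τ⁻¹) := by gcongr; nlinarith
    _ ≤ (C₀ + 1) * (12 + 8 / c) * τ⁻¹ := by rw [mul_assoc]; gcongr; linarith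

/-- Two-point overlap bound: characteristics meeting (within `λ^{-3/4}`) at two
times `t, s` must have initial frequencies within `O(λ^{3/4}|t-s|⁻¹)` of each
other; since frequencies lie on a `λ^{3/4}`-grid (with multiplicity at most `C₀`
in `x`), at most `C·|t-s|⁻¹` lattice packets pass near both points, with `C`
depending only on `c` and `C₀`. -/
theorem statement_11 (c : ℝ) (hc : c ∈ Set.Ioo (0:ℝ) 1) (C₀ : ℕ) :
    ∃ C : ℝ, 0 < C ∧
      ∀ (lam t s y z : ℝ) (xt xs ξt ξs : ℝ → ℝ → ℝ),
        2 ≤ lam → t ≠ s → |t - s| ≤ 1 →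
        (∀ x₁ ξ₁ x₂ ξ₂ : ℝ,
            |xt x₁ ξ₁ - xt x₂ ξ₂| ≤ lam ^ (-(3:ℝ)/4) →
              |ξ₁ - ξ₂| ≤ 2 * |ξt x₁ ξ₁ - ξt x₂ ξ₂| + lam ^ ((3:ℝ)/4)) →
        (∀ x₁ ξ₁ x₂ ξ₂ : ℝ,
            |xt x₁ ξ₁ - xt x₂ ξ₂| ≤ lam ^ (-(3:ℝ)/4) →
            |xs x₁ ξ₁ - xs x₂ ξ₂| ≤ lam ^ (-(3:ℝ)/4) →
              c * lam ^ (-(3:ℝ)/2) * (|ξ₁ - ξ₂| - lam ^ ((3:ℝ)/4)) * |t - s|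
                ≤ lam ^ (-(3:ℝ)/4)) →
        ∀ S : Set (ℝ × ℝ),
          S = {p : ℝ × ℝ |
              (∃ m : ℤ, p.1 = lam ^ (-(3:ℝ)/4) * (m : ℝ)) ∧
              (∃ n : ℤ, p.2 = lam ^ ((3:ℝ)/4) * (n : ℝ)) ∧
              |xt p.1 p.2 - y| ≤ lam ^ (-(3:ℝ)/4) ∧
              |xs p.1 p.2 - z| ≤ lam ^ (-(3:ℝ)/4)} →
          (∀ ξ₀ : ℝ, ({x : ℝ | (x, ξ₀) ∈ S}).Finite ∧
              ({x : ℝ | (x, ξ₀) ∈ S}).ncard ≤ C₀) →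
          S.Finite ∧ (S.ncard : ℝ) ≤ C * |t - s|⁻¹ := by
  obtain ⟨hc, -⟩ := hc
  refine ⟨(C₀ + 1) * (12 + 8 / c), by positivity, ?_⟩
  rintro lam t s y z xt xs ξt ξs hlam hts hts1 - hspread S rfl hmult
  have hlam0 : 0 < lam := by linarith
  have hτ : 0 < |t - s| := abs_pos.2 (sub_ne_zero.2 hts)
  have hcount := encard_le_of_close_at_two_points (u := fun p ↦ xt p.1 p.2)
    (v := fun p ↦ xs p.1 p.2) (Real.rpow_pos_of_pos hlam0 ((3:ℝ)/4)) (fun p hp ↦ hp.2.1)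
    (fun p hp ↦ hp.2.2.1) (fun p hp ↦ hp.2.2.2)
    (fun p _ q _ hpq_t hpq_s ↦ le_mul_one_add_inv_of_spreading hlam0 hc hτ
      (hspread _ _ _ _ hpq_t hpq_s))
    (fun ξ ↦ encard_le_coe_iff_finite_ncard_le.2 (hmult ξ))
  obtain ⟨hfin, hcard⟩ := encard_le_coe_iff_finite_ncard_le.1 (hcount.trans_eq (by norm_cast))
  exact ⟨hfin, (Nat.cast_le.2 hcard).trans (natCast_four_mul_floor_le C₀ hc hτ hts1)⟩
end
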